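/- arXiv:1907.12880 — 4 statements merged into one kernel-verified Lean document; each statement's English description precedes it below -/
import Mathlib

section
/- Let Z_i (i = 1,…,N) be block-diagonal instrument matrices built from row vectors z_{it}' (t = 1,…,R), and let U be an R×R invertible upper-triangular matrix. Suppose there exists an invertible matrix C with C·Z_i' = Z_i'·U for all i. Then for any matrices A_i (R×p), B_i (R×q), and any positive definite weighting matrix built from residuals, the quadratic form Σ_i A_i'U'Z_i (Σ_i Z_i'U e_i e_i' U'Z_i)⁻¹ Σ_i Z_i'U B_i equals Σ_i A_i'Z_i (Σ_i Z_i' e_i e_i' Z_i)⁻¹ Σ_i Z_i' B_i, provided the inner matrix Σ_i Z_i' e_i e_i' Z_i is invertible. -/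
/-!
Writing `W = ∑ Z_iᵀ e_i e_iᵀ Z_i`, the intertwining relation `C Z_iᵀ = Z_iᵀ U` and its transpose
`Uᵀ Z_i = Z_i Cᵀ` move `U` through every factor: the transformed weighting matrix is the
congruence `C W Cᵀ`, and the two outer sums become `(∑ A_iᵀ Z_i) Cᵀ` and `C (∑ Z_iᵀ B_i)`.
Inverting `C W Cᵀ` as `Cᵀ⁻¹ W⁻¹ C⁻¹`, the factors `C` and `Cᵀ` cancel.
-/

open Matrix

namespace Matrix

variable {l m n o : Type*} {α : Type*}

theorem vecMulVec_mulVec_mulVec [CommSemiring α] [Fintype m] [Fintype n]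
    (M : Matrix l m α) (N : Matrix o n α) (x : m → α) (y : n → α) :
    vecMulVec (M *ᵥ x) (N *ᵥ y) = M * vecMulVec x y * Nᵀ := by
  rw [mul_vecMulVec, vecMulVec_mul, vecMul_transpose]

theorem transpose_mul_eq_mul_transpose_of_mul_transpose_eq [CommSemiring α] [Fintype m]
    [Fintype n] {Z : Matrix m n α} {U : Matrix m m α} {C : Matrix n n α}
    (hCZ : C * Zᵀ = Zᵀ * U) : Uᵀ * Z = Z * Cᵀ := by
  simpa only [transpose_mul, transpose_transpose] using congrArg transpose hCZ.symm

theorem transpose_mul_conj_mul_of_mul_transpose_eq [CommSemiring α] [Fintype m] [Fintype n]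
    {Z : Matrix m n α} {U : Matrix m m α} {C : Matrix n n α} (hCZ : C * Zᵀ = Zᵀ * U)
    (M : Matrix m m α) :
    Zᵀ * (U * M * Uᵀ) * Z = C * (Zᵀ * M * Z) * Cᵀ := by
  calc Zᵀ * (U * M * Uᵀ) * Z = (Zᵀ * U) * M * (Uᵀ * Z) := by simp only [Matrix.mul_assoc]
    _ = (C * Zᵀ) * M * (Z * Cᵀ) := by
        rw [hCZ, transpose_mul_eq_mul_transpose_of_mul_transpose_eq hCZ]
    _ = C * (Zᵀ * M * Z) * Cᵀ := by simp only [Matrix.mul_assoc]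

theorem mul_transpose_mul_inv_conj_mul_mul [CommRing α] [Fintype n] [DecidableEq n]
    {C : Matrix n n α} (hC : IsUnit C) (X : Matrix l n α) (W : Matrix n n α)
    (Y : Matrix n o α) :
    X * Cᵀ * (C * W * Cᵀ)⁻¹ * (C * Y) = X * W⁻¹ * Y := by
  have hCdet : IsUnit C.det := (isUnit_iff_isUnit_det C).mp hC
  have hCTdet : IsUnit Cᵀ.det := by rwa [det_transpose]
  calc X * Cᵀ * (C * W * Cᵀ)⁻¹ * (C * Y)
      = X * (Cᵀ * Cᵀ⁻¹) * W⁻¹ * (C⁻¹ * C) * Y := by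
        simp only [mul_inv_rev, Matrix.mul_assoc]
    _ = X * W⁻¹ * Y := by
        rw [mul_nonsing_inv _ hCTdet, nonsing_inv_mul _ hCdet, Matrix.mul_one, Matrix.mul_one]

end Matrix

theorem gmm_quadratic_form_invariance_general
    (N R k p q : ℕ)
    (Z : Fin N → Matrix (Fin R) (Fin k) ℝ)
    (U : Matrix (Fin R) (Fin R) ℝ)
    (C : Matrix (Fin k) (Fin k) ℝ) (hC : IsUnit C)
    (hCZ : ∀ i, C * (Z i)ᵀ = (Z i)ᵀ * U)
    (e : Fin N → Fin R → ℝ)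
    (A : Fin N → Matrix (Fin R) (Fin p) ℝ)
    (B : Fin N → Matrix (Fin R) (Fin q) ℝ) :
    (∑ i, (A i)ᵀ * Uᵀ * Z i) *
        (∑ i, (Z i)ᵀ * vecMulVec (U *ᵥ e i) (U *ᵥ e i) * Z i)⁻¹ *
        (∑ i, (Z i)ᵀ * U * B i)
      = (∑ i, (A i)ᵀ * Z i) *
        (∑ i, (Z i)ᵀ * vecMulVec (e i) (e i) * Z i)⁻¹ *
        (∑ i, (Z i)ᵀ * B i) := by
  have hUZ : ∀ i, Uᵀ * Z i = Z i * Cᵀ := fun i =>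
    transpose_mul_eq_mul_transpose_of_mul_transpose_eq (hCZ i)
  have hA : ∑ i, (A i)ᵀ * Uᵀ * Z i = (∑ i, (A i)ᵀ * Z i) * Cᵀ := by
    simp only [Matrix.sum_mul, Matrix.mul_assoc, hUZ]
  have hW : ∑ i, (Z i)ᵀ * vecMulVec (U *ᵥ e i) (U *ᵥ e i) * Z i
      = C * (∑ i, (Z i)ᵀ * vecMulVec (e i) (e i) * Z i) * Cᵀ := by
    simp only [vecMulVec_mulVec_mulVec, transpose_mul_conj_mul_of_mul_transpose_eq (hCZ _),
      Matrix.mul_sum, Matrix.sum_mul]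
  have hB : ∑ i, (Z i)ᵀ * U * B i = C * ∑ i, (Z i)ᵀ * B i := by
    simp only [Matrix.mul_sum, ← hCZ, Matrix.mul_assoc]
  rw [hA, hW, hB, mul_transpose_mul_inv_conj_mul_mul hC]

/-- If `C` is invertible with `C Z_iᵀ = Z_iᵀ U` for all `i`, then the GMM quadratic
forms built with the `U`-transformed data coincide with those built with the
untransformed data. -/
theorem gmm_quadratic_form_invariance
    (N R k p q : ℕ)
    (Z : Fin N → Matrix (Fin R) (Fin k) ℝ)
    (U : Matrix (Fin R) (Fin R) ℝ) (hU : IsUnit U)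
    (C : Matrix (Fin k) (Fin k) ℝ) (hC : IsUnit C)
    (hCZ : ∀ i, C * (Z i)ᵀ = (Z i)ᵀ * U)
    (e : Fin N → Fin R → ℝ)
    (A : Fin N → Matrix (Fin R) (Fin p) ℝ)
    (B : Fin N → Matrix (Fin R) (Fin q) ℝ)
    (hW : IsUnit (∑ i, (Z i)ᵀ * vecMulVec (e i) (e i) * Z i)) :
    (∑ i, (A i)ᵀ * Uᵀ * Z i) *
        (∑ i, (Z i)ᵀ * vecMulVec (U *ᵥ e i) (U *ᵥ e i) * Z i)⁻¹ *
        (∑ i, (Z i)ᵀ * U * B i)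
      = (∑ i, (A i)ᵀ * Z i) *
        (∑ i, (Z i)ᵀ * vecMulVec (e i) (e i) * Z i)⁻¹ *
        (∑ i, (Z i)ᵀ * B i) :=
  gmm_quadratic_form_invariance_general N R k p q Z U C hC hCZ e A B
end

section
/- (Invariance of two-step GMM to transformation.) Let K be an R×T matrix with KK' positive definite, U the upper-triangular Cholesky factor of (KK')⁻¹, and F = UK. Suppose there is an invertible matrix C with CZ_i' = Z_i'U for all i. Let X̃_i = KX_i, ỹ_i = Ky_i, ẽ_i = Ke_i and Ẍ_i = FX_i, ÿ_i = Fy_i, ë_i = Fe_i. If the two-step GMM weighting matrices W_K = Σ_i Z_i'ẽ_iẽ_i'Z_i and W_F = Σ_i Z_i'ë_ië_i'Z_i and the corresponding 'Hessian' matrices are invertible, then the two-step GMM estimators β̂_K = [Σ_i X̃_i'Z_i W_K⁻¹ Σ_i Z_i'X̃_i]⁻¹ Σ_i X̃_i'Z_i W_K⁻¹ Σ_i Z_i'ỹ_i and β̂_F (defined analogously with F-transformed data) are equal. -/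
/-!
Premultiplying the data by `F = U K` instead of `K` multiplies every instrument-side moment by
the invertible matrix `C`, because `Zᵢᵀ F = Zᵢᵀ U K = C Zᵢᵀ K`. Hence the moment vector, the
Jacobian and the weighting matrix change to `C ḡ`, `C Ḡ` and `C W Cᵀ`, and the two-step GMM
estimator `(Ḡᵀ W⁻¹ Ḡ)⁻¹ Ḡᵀ W⁻¹ ḡ` is unchanged by such a change of coordinates.
-/

open Matrix

namespace Matrix

variable {ι l m n R : Type*} [Fintype ι] [Fintype m] [Fintype n] [CommRing R]

theorem vecMulVec_mulVec_self (M : Matrix l m R) (v : m → R) :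
    vecMulVec (M *ᵥ v) (M *ᵥ v) = M * vecMulVec v v * Mᵀ := by
  rw [mul_vecMulVec, vecMulVec_mul, vecMul_transpose]

theorem transpose_mul_vecMulVec_mul (M : Matrix m l R) (v : m → R) :
    Mᵀ * vecMulVec v v * M = vecMulVec (Mᵀ *ᵥ v) (Mᵀ *ᵥ v) := by
  rw [vecMulVec_mulVec_self, transpose_transpose]

/-- `gmmEstimator A W B b = (A W⁻¹ B)⁻¹ A W⁻¹ b`; for GMM, `B` is the Jacobian `∑ Zᵢᵀ Xᵢ`,
`A = Bᵀ`, `W` the weighting matrix and `b = ∑ Zᵢᵀ yᵢ`. -/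
noncomputable def gmmEstimator [Fintype l] [DecidableEq l] [DecidableEq n] (A : Matrix l n R)
    (W : Matrix n n R) (B : Matrix n l R) (b : n → R) : l → R :=
  (A * W⁻¹ * B)⁻¹ *ᵥ ((A * W⁻¹) *ᵥ b)

theorem gmmEstimator_transform [Fintype l] [DecidableEq l] [DecidableEq n] {C : Matrix n n R}
    (hC : IsUnit C) (A : Matrix l n R) (W : Matrix n n R) (B : Matrix n l R) (b : n → R) :
    gmmEstimator (A * Cᵀ) (C * W * Cᵀ) (C * B) (C *ᵥ b) = gmmEstimator A W B b := by
  have hdet : IsUnit C.det := (isUnit_iff_isUnit_det C).mp hC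
  have hAW : A * Cᵀ * (C * W * Cᵀ)⁻¹ = A * W⁻¹ * C⁻¹ := by
    simp only [mul_inv_rev, Matrix.mul_assoc,
      mul_nonsing_inv_cancel_left (A := Cᵀ) _ (isUnit_det_transpose C hdet)]
  rw [gmmEstimator, gmmEstimator, hAW, Matrix.mul_assoc (A * W⁻¹) C⁻¹,
    nonsing_inv_mul_cancel_left (A := C) B hdet, mulVec_mulVec b,
    nonsing_inv_mul_cancel_right (A := C) _ hdet]

section Instruments

variable {r k : Type*} [Fintype r] [Fintype k] {Z : ι → Matrix r k R} {K F : Matrix r n R}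
  {C : Matrix k k R}

theorem sum_transpose_mul_mul_eq (h : ∀ i, (Z i)ᵀ * F = C * ((Z i)ᵀ * K))
    (X : ι → Matrix n l R) : ∑ i, (Z i)ᵀ * (F * X i) = C * ∑ i, (Z i)ᵀ * (K * X i) := by
  simp only [Matrix.mul_sum, ← Matrix.mul_assoc, h]

theorem sum_mul_transpose_mul_eq (h : ∀ i, (Z i)ᵀ * F = C * ((Z i)ᵀ * K))
    (X : ι → Matrix n l R) : ∑ i, (F * X i)ᵀ * Z i = (∑ i, (K * X i)ᵀ * Z i) * Cᵀ := by
  simpa only [transpose_sum, transpose_mul, transpose_transpose, Matrix.mul_assoc]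
    using congrArg transpose (sum_transpose_mul_mul_eq h X)

theorem sum_transpose_mulVec_mulVec_eq (h : ∀ i, (Z i)ᵀ * F = C * ((Z i)ᵀ * K))
    (y : ι → n → R) : ∑ i, (Z i)ᵀ *ᵥ (F *ᵥ y i) = C *ᵥ ∑ i, (Z i)ᵀ *ᵥ (K *ᵥ y i) := by
  simp only [mulVec_sum, mulVec_mulVec, h]

theorem sum_transpose_mul_vecMulVec_mul_eq (h : ∀ i, (Z i)ᵀ * F = C * ((Z i)ᵀ * K))
    (e : ι → n → R) :
    ∑ i, (Z i)ᵀ * vecMulVec (F *ᵥ e i) (F *ᵥ e i) * Z i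
      = C * (∑ i, (Z i)ᵀ * vecMulVec (K *ᵥ e i) (K *ᵥ e i) * Z i) * Cᵀ := by
  simp only [Matrix.mul_sum, Matrix.sum_mul, transpose_mul_vecMulVec_mul, mulVec_mulVec, h,
    ← vecMulVec_mulVec_self]

end Instruments

end Matrix

theorem twoStep_gmm_invariance_general
    (N R T p k : ℕ)
    (K : Matrix (Fin R) (Fin T) ℝ)
    (U : Matrix (Fin R) (Fin R) ℝ)
    (F : Matrix (Fin R) (Fin T) ℝ) (hF : F = U * K)
    (Z : Fin N → Matrix (Fin R) (Fin k) ℝ)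
    (C : Matrix (Fin k) (Fin k) ℝ) (hC : IsUnit C)
    (hCZ : ∀ i, C * (Z i)ᵀ = (Z i)ᵀ * U)
    (X : Fin N → Matrix (Fin T) (Fin p) ℝ)
    (y e : Fin N → Fin T → ℝ)
    (WK WF : Matrix (Fin k) (Fin k) ℝ)
    (hWK : WK = ∑ i, (Z i)ᵀ * vecMulVec (K *ᵥ e i) (K *ᵥ e i) * Z i)
    (hWF : WF = ∑ i, (Z i)ᵀ * vecMulVec (F *ᵥ e i) (F *ᵥ e i) * Z i)
    (HK HF : Matrix (Fin p) (Fin p) ℝ)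
    (hHK : HK = (∑ i, (K * X i)ᵀ * Z i) * WK⁻¹ * (∑ i, (Z i)ᵀ * (K * X i)))
    (hHF : HF = (∑ i, (F * X i)ᵀ * Z i) * WF⁻¹ * (∑ i, (Z i)ᵀ * (F * X i)))
    (βK βF : Fin p → ℝ)
    (hβK : βK = HK⁻¹ *ᵥ (((∑ i, (K * X i)ᵀ * Z i) * WK⁻¹) *ᵥ (∑ i, (Z i)ᵀ *ᵥ (K *ᵥ y i))))
    (hβF : βF = HF⁻¹ *ᵥ (((∑ i, (F * X i)ᵀ * Z i) * WF⁻¹) *ᵥ (∑ i, (Z i)ᵀ *ᵥ (F *ᵥ y i)))) :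
    βF = βK := by
  have hZF : ∀ i, (Z i)ᵀ * F = C * ((Z i)ᵀ * K) := fun i => by
    rw [hF, ← Matrix.mul_assoc, ← hCZ i, Matrix.mul_assoc]
  subst hβF hβK hHF hHK hWF hWK
  rw [sum_mul_transpose_mul_eq hZF, sum_transpose_mul_mul_eq hZF,
    sum_transpose_mulVec_mulVec_eq hZF, sum_transpose_mul_vecMulVec_mul_eq hZF]
  exact gmmEstimator_transform hC _ _ _ _

/-- Invariance of two-step GMM to transformation: if `F = U K` with `U` the
upper-triangular Cholesky factor of `(K Kᵀ)⁻¹`, and there is an invertible `C` with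
`C Z_iᵀ = Z_iᵀ U` for all `i`, then the two-step GMM estimators based on the
`K`-transformed and the `F`-transformed data coincide. -/
theorem twoStep_gmm_invariance
    (N R T p k : ℕ)
    (K : Matrix (Fin R) (Fin T) ℝ) (hpd : (K * Kᵀ).PosDef)
    (U : Matrix (Fin R) (Fin R) ℝ)
    (hUtri : U.BlockTriangular id)
    (hU : Uᵀ * U = (K * Kᵀ)⁻¹)
    (F : Matrix (Fin R) (Fin T) ℝ) (hF : F = U * K)
    (Z : Fin N → Matrix (Fin R) (Fin k) ℝ)
    (C : Matrix (Fin k) (Fin k) ℝ) (hC : IsUnit C)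
    (hCZ : ∀ i, C * (Z i)ᵀ = (Z i)ᵀ * U)
    (X : Fin N → Matrix (Fin T) (Fin p) ℝ)
    (y e : Fin N → Fin T → ℝ)
    (WK WF : Matrix (Fin k) (Fin k) ℝ)
    (hWK : WK = ∑ i, (Z i)ᵀ * vecMulVec (K *ᵥ e i) (K *ᵥ e i) * Z i)
    (hWF : WF = ∑ i, (Z i)ᵀ * vecMulVec (F *ᵥ e i) (F *ᵥ e i) * Z i)
    (hWKu : IsUnit WK) (hWFu : IsUnit WF)
    (HK HF : Matrix (Fin p) (Fin p) ℝ)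
    (hHK : HK = (∑ i, (K * X i)ᵀ * Z i) * WK⁻¹ * (∑ i, (Z i)ᵀ * (K * X i)))
    (hHF : HF = (∑ i, (F * X i)ᵀ * Z i) * WF⁻¹ * (∑ i, (Z i)ᵀ * (F * X i)))
    (hHKu : IsUnit HK) (hHFu : IsUnit HF)
    (βK βF : Fin p → ℝ)
    (hβK : βK = HK⁻¹ *ᵥ (((∑ i, (K * X i)ᵀ * Z i) * WK⁻¹) *ᵥ (∑ i, (Z i)ᵀ *ᵥ (K *ᵥ y i))))
    (hβF : βF = HF⁻¹ *ᵥ (((∑ i, (F * X i)ᵀ * Z i) * WF⁻¹) *ᵥ (∑ i, (Z i)ᵀ *ᵥ (F *ᵥ y i)))) :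
    βF = βK :=
  twoStep_gmm_invariance_general N R T p k K U F hF Z C hC hCZ X y e WK WF hWK hWF HK HF hHK hHF βK
    βF hβK hβF
end

section
/- Let Z_i be block diagonal with blocks z_{it}' (1×k_t), t = 1,…,R, and let U be an invertible upper-triangular R×R matrix with all entries of its strictly-upper-triangular part nonzero in the sense of the FOD Cholesky factor. If for every s ≤ t each entry of z_{is} is a linear combination of the entries of z_{it} (with coefficients not depending on i), then there exists an invertible matrix C (of size Σk_t × Σk_t) such that CZ_i' = Z_i'U for every i. -/
open Matrix

/-- Sufficiency of the instruments condition: if every entry of `z_{is}` is a linear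
combination (with `i`-independent coefficients) of the entries of `z_{it}` for all
`s ≤ t`, then for any invertible upper-triangular `U` (with all entries on and above
the diagonal nonzero, as for the FOD Cholesky factor) there exists an invertible `C`
with `C Z_iᵀ = Z_iᵀ U` for every `i`, where `Z_i` is the block-diagonal instrument
matrix with `t`-th diagonal block `z_{it}ᵀ`. -/
theorem instruments_condition_implies_intertwiner
    (N R : ℕ) (k : Fin R → ℕ)
    (z : Fin N → (t : Fin R) → Fin (k t) → ℝ)
    (Z : Fin N → Matrix (Fin R) ((t : Fin R) × Fin (k t)) ℝ)
    (hZ : ∀ i (t : Fin R) (s : Fin R) (j : Fin (k s)),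
      Z i t ⟨s, j⟩ = if h : s = t then z i t (Fin.cast (congrArg k h) j) else 0)
    (U : Matrix (Fin R) (Fin R) ℝ)
    (hUtri : U.BlockTriangular id)
    (hUu : IsUnit U)
    (hUnz : ∀ s t : Fin R, s ≤ t → U s t ≠ 0)
    (hlin : ∀ s t : Fin R, s ≤ t →
      ∃ Λ : Matrix (Fin (k s)) (Fin (k t)) ℝ, ∀ i, z i s = Λ *ᵥ z i t) :
    ∃ C : Matrix ((t : Fin R) × Fin (k t)) ((t : Fin R) × Fin (k t)) ℝ,
      IsUnit C ∧ ∀ i, C * (Z i)ᵀ = (Z i)ᵀ * U := by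
  classical
  set Λ : ∀ s t : Fin R, s ≤ t → Matrix (Fin (k s)) (Fin (k t)) ℝ :=
    fun s t h => (hlin s t h).choose with hΛdef
  have hΛ : ∀ (s t : Fin R) (h : s ≤ t) (i), z i s = Λ s t h *ᵥ z i t :=
    fun s t h => (hlin s t h).choose_spec
  set C : Matrix ((t : Fin R) × Fin (k t)) ((t : Fin R) × Fin (k t)) ℝ :=
    fun p q =>
      if h : p.1 = q.1 then (if Fin.cast (congrArg k h) p.2 = q.2 then U p.1 q.1 else 0)
      else if h2 : p.1 ≤ q.1 then U p.1 q.1 * Λ p.1 q.1 h2 p.2 q.2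
      else 0 with hCdef
  have hBT : C.BlockTriangular Sigma.fst := by
    intro p q hlt
    have h1 : p.1 ≠ q.1 := ne_of_gt hlt
    have h2 : ¬ p.1 ≤ q.1 := not_le.mpr hlt
    simp [hCdef, h1, h2]
  have hdiagblock : ∀ t : Fin R,
      C.toSquareBlock Sigma.fst t = Matrix.diagonal (fun _ => U t t) := by
    intro t
    ext ⟨⟨ta, ja⟩, ha⟩ ⟨⟨tb, jb⟩, hb⟩
    simp only at ha hb
    subst ha; subst hb
    by_cases hab : ja = jb
    · subst hab
      rw [Matrix.toSquareBlock_def]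
      simp [hCdef, Matrix.diagonal_apply_eq]
    · rw [Matrix.toSquareBlock_def]
      simp [hCdef, Matrix.diagonal_apply, Subtype.ext_iff,
        Sigma.ext_iff, heq_eq_eq, hab]
  have hdet : C.det ≠ 0 := by
    rw [hBT.det]
    apply Finset.prod_ne_zero_iff.mpr
    intro t ht
    rw [hdiagblock t, Matrix.det_diagonal]
    exact Finset.prod_ne_zero_iff.mpr fun _ _ => hUnz t t le_rfl
  refine ⟨C, ?_, ?_⟩
  · rw [Matrix.isUnit_iff_isUnit_det]
    exact isUnit_iff_ne_zero.mpr hdet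
  · intro i
    ext ⟨t, j⟩ s
    rw [Matrix.mul_apply, Matrix.mul_apply]
    have hR : ∑ r, (Z i)ᵀ ⟨t, j⟩ r * U r s = z i t j * U t s := by
      rw [Finset.sum_eq_single t]
      · simp [Matrix.transpose_apply, hZ]
      · intro r _ hr
        simp [Matrix.transpose_apply, hZ, hr.symm]
      · simp
    rw [hR]
    have hL : ∑ x : (t : Fin R) × Fin (k t), C ⟨t, j⟩ x * (Z i)ᵀ x s
        = ∑ l : Fin (k s), C ⟨t, j⟩ ⟨s, l⟩ * z i s l := by
      rw [← Finset.univ_sigma_univ, Finset.sum_sigma]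
      rw [Finset.sum_eq_single s]
      · simp [Matrix.transpose_apply, hZ]
      · intro r _ hr
        apply Finset.sum_eq_zero
        intro l _
        simp [Matrix.transpose_apply, hZ, hr]
      · simp
    rw [hL]
    rcases lt_trichotomy t s with hts | hts | hts
    · -- strictly below diagonal of blocks: t < s
      have hne : t ≠ s := ne_of_lt hts
      have hle : t ≤ s := le_of_lt hts
      simp only [hCdef]
      simp only [dif_neg (by exact hne : ¬ (⟨t, j⟩ : (t : Fin R) × Fin (k t)).1 = s)]
      simp only [dif_pos hle]
      have : ∑ l : Fin (k s), U t s * Λ t s hle j l * z i s l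
          = U t s * ∑ l, Λ t s hle j l * z i s l := by
        rw [Finset.mul_sum]; congr 1; ext l; ring
      rw [this]
      have hz : ∑ l, Λ t s hle j l * z i s l = z i t j := by
        have := hΛ t s hle i
        have := congrFun this j
        rw [this]
        simp [Matrix.mulVec, dotProduct]
      rw [hz]; ring
    · -- diagonal block
      subst hts
      rw [Finset.sum_eq_single j]
      · simp [hCdef, mul_comm]
      · intro l _ hl
        simp [hCdef, hl.symm]
      · simp
    · -- below: s < t, both sides zero
      have hne : ¬ ((⟨t, j⟩ : (t : Fin R) × Fin (k t)).1 = s) := ne_of_gt hts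
      have h2 : ¬ t ≤ s := not_le.mpr hts
      have hU0 : U t s = 0 := hUtri hts
      simp [hCdef, hne, h2, hU0]
end

section
/- Let U be an invertible upper-triangular R×R matrix with u_{st} ≠ 0 for all s ≤ t. If there exists an invertible matrix C with CZ_i' = Z_i'U for all possible block-diagonal instrument matrices Z_i drawn from a given family, then for every s ≤ t, each entry of z_{is} must be a linear combination of entries of z_{it} (with coefficients independent of i). Equivalently, the existence of such C for all i forces the linear-combination instruments condition. -/
open Matrix

/-- Necessity of the instruments condition: if `U` is invertible upper triangular with
all entries on and above the diagonal nonzero, and a fixed invertible `C` satisfies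
`C Z_iᵀ = Z_iᵀ U` for all `i`, then for every `s ≤ t` each entry of `z_{is}` is a
linear combination (with `i`-independent coefficients) of the entries of `z_{it}`. -/
theorem intertwiner_implies_instruments_condition
    (N R : ℕ) (k : Fin R → ℕ)
    (z : Fin N → (t : Fin R) → Fin (k t) → ℝ)
    (Z : Fin N → Matrix (Fin R) ((t : Fin R) × Fin (k t)) ℝ)
    (hZ : ∀ i (t : Fin R) (s : Fin R) (j : Fin (k s)),
      Z i t ⟨s, j⟩ = if h : s = t then z i t (Fin.cast (congrArg k h) j) else 0)
    (U : Matrix (Fin R) (Fin R) ℝ)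
    (hUtri : U.BlockTriangular id)
    (hUu : IsUnit U)
    (hUnz : ∀ s t : Fin R, s ≤ t → U s t ≠ 0)
    (C : Matrix ((t : Fin R) × Fin (k t)) ((t : Fin R) × Fin (k t)) ℝ)
    (hCu : IsUnit C)
    (hCZ : ∀ i, C * (Z i)ᵀ = (Z i)ᵀ * U) :
    ∀ s t : Fin R, s ≤ t →
      ∃ Λ : Matrix (Fin (k s)) (Fin (k t)) ℝ, ∀ i, z i s = Λ *ᵥ z i t := by
  intro s t hst
  refine ⟨fun j j' => C ⟨s, j⟩ ⟨t, j'⟩ / U s t, fun i => ?_⟩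
  funext j
  have h := congrFun (congrFun (hCZ i) ⟨s, j⟩) t
  have hl : (C * (Z i)ᵀ) ⟨s, j⟩ t = ∑ j', C ⟨s, j⟩ ⟨t, j'⟩ * z i t j' := by
    rw [mul_apply, ← Finset.univ_sigma_univ, Finset.sum_sigma]
    rw [Finset.sum_eq_single t]
    · apply Finset.sum_congr rfl
      intro j' _
      rw [transpose_apply, hZ]
      simp
    · intro b _ hb
      apply Finset.sum_eq_zero
      intro j' _
      rw [transpose_apply, hZ]
      simp [hb]
    · simp
  have hr : ((Z i)ᵀ * U) ⟨s, j⟩ t = z i s j * U s t := by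
    rw [mul_apply]
    rw [Finset.sum_eq_single s]
    · rw [transpose_apply, hZ]; simp
    · intro b _ hb
      rw [transpose_apply, hZ]
      simp [Ne.symm hb]
    · simp
  rw [hl, hr] at h
  have hU := hUnz s t hst
  simp only [mulVec, dotProduct]
  show z i s j = ∑ j', (C ⟨s, j⟩ ⟨t, j'⟩ / U s t) * z i t j'
  have : ∑ j', (C ⟨s, j⟩ ⟨t, j'⟩ / U s t) * z i t j'
      = (∑ j', C ⟨s, j⟩ ⟨t, j'⟩ * z i t j') / U s t := by
    rw [Finset.sum_div]
    apply Finset.sum_congr rfl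
    intro j' _
    ring
  rw [this, h, mul_div_cancel_right₀ _ hU]
end
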